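/- Let Kn > 0 and let σ_s, σ_a : (0,1) → ℝ be positive. Suppose f, g : (0,1) × [-1,1] → ℝ are continuous, continuously differentiable in x with jointly continuous x-derivatives, and satisfy the subcritical 1D stationary radiative transfer equations pointwise: v·∂ₓf(x,v) = (σ_s(x)/Kn)·(⟨f⟩(x) − f(x,v)) − Kn·σ_a(x)·f(x,v) and −v·∂ₓg(x,v) = (σ_s(x)/Kn)·(⟨g⟩(x) − g(x,v)) − Kn·σ_a(x)·g(x,v). Then for every x ∈ (0,1): (d/dx)⟨f g⟩(x) = [(σ_s(x)/σ_a(x)) / (Kn² + σ_s(x)/σ_a(x))] · (d/dx)(⟨f⟩·⟨g⟩)(x), and consequently, for γ(x) := (1/Kn)·(⟨f⟩(x)·⟨g⟩(x) − ⟨f g⟩(x)), one has (d/dx)γ(x) = [Kn / (Kn² + σ_s(x)/σ_a(x))] · (d/dx)(⟨f⟩·⟨g⟩)(x). -/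

import Mathlib

/-!
Multiplying the transport equation for `f` by `∂ₓg`, the adjoint one for `g` by `∂ₓf` and adding,
the streaming terms `v ∂ₓf ∂ₓg` cancel, leaving the pointwise identity
`(S + K) ∂ₓ(f g) = S (∂ₓf ⟨g⟩ + ⟨f⟩ ∂ₓg)` with `S = σ_s / Kn` and `K = Kn σ_a`.
Averaging in `v` and differentiating under the integral gives the claim, and the formula for `γ`
is then linear algebra in the two derivatives.
-/

open MeasureTheory Set

/-- Velocity average `⟨h⟩(x) = (1/2)∫_{-1}^{1} h(x,v) dv`. -/
noncomputable def vavg (h : ℝ → ℝ → ℝ) (x : ℝ) : ℝ := (1 / 2) * ∫ v in (-1 : ℝ)..1, h x v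

open Metric Function Interval in
theorem hasDerivAt_intervalIntegral_of_continuousOn {E : Type*} [NormedAddCommGroup E]
    [NormedSpace ℝ E] {U : Set ℝ} (hU : IsOpen U) {a b : ℝ} {F F' : ℝ → ℝ → E}
    (hF : ContinuousOn (uncurry F) (U ×ˢ [[a, b]]))
    (hF' : ContinuousOn (uncurry F') (U ×ˢ [[a, b]]))
    (hderiv : ∀ x ∈ U, ∀ v ∈ [[a, b]], HasDerivAt (F · v) (F' x v) x) {x : ℝ} (hx : x ∈ U) :
    HasDerivAt (fun y => ∫ v in a..b, F y v) (∫ v in a..b, F' x v) x := by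
  obtain ⟨ε, hε, hball⟩ := nhds_basis_closedBall.mem_iff.1 (hU.mem_nhds hx)
  obtain ⟨C, hC⟩ := ((isCompact_closedBall x ε).prod isCompact_uIcc).exists_bound_of_continuousOn
    (hF'.mono (prod_mono hball subset_rfl))
  have hmeas {G : ℝ → ℝ → E} (hG : ContinuousOn (uncurry G) (U ×ˢ [[a, b]])) {y : ℝ}
      (hy : y ∈ U) : AEStronglyMeasurable (G y) (volume.restrict (Ι a b)) :=
    ((hG.uncurry_left y hy).mono uIoc_subset_uIcc).aestronglyMeasurable measurableSet_uIoc
  refine (intervalIntegral.hasDerivAt_integral_of_dominated_loc_of_deriv_le (bound := fun _ => C)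
    (ball_mem_nhds x hε) (Filter.eventually_of_mem (hU.mem_nhds hx) fun y hy => hmeas hF hy)
    ((hF.uncurry_left x hx).intervalIntegrable) (hmeas hF' hx)
    (Filter.Eventually.of_forall fun v hv y hy =>
      hC (y, v) ⟨ball_subset_closedBall hy, uIoc_subset_uIcc hv⟩)
    intervalIntegrable_const
    (Filter.Eventually.of_forall fun v hv y hy =>
      hderiv y (hball (ball_subset_closedBall hy)) v (uIoc_subset_uIcc hv))).2

open Function in
theorem hasDerivAt_vavg {h h' : ℝ → ℝ → ℝ} {U : Set ℝ} (hU : IsOpen U)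
    (hc : ContinuousOn (uncurry h) (U ×ˢ Icc (-1) 1))
    (hc' : ContinuousOn (uncurry h') (U ×ˢ Icc (-1) 1))
    (hderiv : ∀ x ∈ U, ∀ v ∈ Icc (-1 : ℝ) 1, HasDerivAt (h · v) (h' x v) x)
    {x : ℝ} (hx : x ∈ U) : HasDerivAt (vavg h) (vavg h' x) x := by
  rw [← uIcc_of_le (by norm_num : (-1 : ℝ) ≤ 1)] at hc hc' hderiv
  exact (hasDerivAt_intervalIntegral_of_continuousOn hU hc hc' hderiv hx).const_mul _

theorem vavg_congr {h k : ℝ → ℝ → ℝ} {x : ℝ} (hhk : ∀ v ∈ Icc (-1 : ℝ) 1, h x v = k x v) :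
    vavg h x = vavg k x := by
  unfold vavg
  rw [intervalIntegral.integral_congr fun v hv => hhk v (by rwa [uIcc_of_le (by norm_num)] at hv)]

theorem transport_product_identity {S K v f f' g g' F G : ℝ}
    (hf : v * f' = S * (F - f) - K * f) (hg : -(v * g') = S * (G - g) - K * g) :
    (S + K) * (f' * g + f * g') = S * (f' * G + F * g') := by
  linear_combination f' * hg + g' * hf

theorem vavg_deriv_mul_add_mul_deriv_eq {S K : ℝ} (hSK : S + K ≠ 0) {f g f' g' : ℝ → ℝ → ℝ}
    {x : ℝ} (hf' : IntervalIntegrable (f' x) volume (-1) 1)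
    (hg' : IntervalIntegrable (g' x) volume (-1) 1)
    (hf : ∀ v ∈ Icc (-1 : ℝ) 1, v * f' x v = S * (vavg f x - f x v) - K * f x v)
    (hg : ∀ v ∈ Icc (-1 : ℝ) 1, -(v * g' x v) = S * (vavg g x - g x v) - K * g x v) :
    vavg (fun y v => f' y v * g y v + f y v * g' y v) x =
      S / (S + K) * (vavg f' x * vavg g x + vavg f x * vavg g' x) :=
  calc vavg (fun y v => f' y v * g y v + f y v * g' y v) x
      _ = vavg (fun y v => S / (S + K) * (f' y v * vavg g x + vavg f x * g' y v)) x :=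
        vavg_congr fun v hv => by
          rw [div_mul_eq_mul_div, eq_div_iff hSK, mul_comm]
          exact transport_product_identity (hf v hv) (hg v hv)
      _ = S / (S + K) * (vavg f' x * vavg g x + vavg f x * vavg g' x) := by
        simp only [vavg, intervalIntegral.integral_const_mul,
          intervalIntegral.integral_add (hf'.mul_const _) (hg'.const_mul _),
          intervalIntegral.integral_mul_const]
        ring

theorem div_div_add_mul_eq_div_div_sq_add {Kn s a : ℝ} (hKn : Kn ≠ 0) (ha : a ≠ 0) :
    s / Kn / (s / Kn + Kn * a) = s / a / (Kn ^ 2 + s / a) := by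
  by_cases h : Kn ^ 2 + s / a = 0
  · have : s / Kn + Kn * a = 0 := by
      field_simp at h ⊢; linear_combination h
    rw [h, this, div_zero, div_zero]
  · have : s / Kn + Kn * a ≠ 0 := by
      contrapose! h; field_simp at h ⊢; linear_combination h
    field_simp
    ring

/-- **Proposition 4.3 (subcritical case identity).**  If `f, g` solve the subcritical 1D
stationary RTE and its adjoint, then at every `x ∈ (0,1)`,
`(d/dx)⟨f g⟩ = [(σ_s/σ_a)/(Kn² + σ_s/σ_a)]·(d/dx)(⟨f⟩⟨g⟩)` and, for
`γ = (1/Kn)(⟨f⟩⟨g⟩ − ⟨f g⟩)`,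
`(d/dx)γ = [Kn/(Kn² + σ_s/σ_a)]·(d/dx)(⟨f⟩⟨g⟩)`. -/
theorem gamma_deriv_identity_subcritical_1D
    (Kn : ℝ) (hKn : 0 < Kn) (σs σa : ℝ → ℝ)
    (hσs : ∀ x ∈ Ioo (0 : ℝ) 1, 0 < σs x)
    (hσa : ∀ x ∈ Ioo (0 : ℝ) 1, 0 < σa x)
    (f g fx gx : ℝ → ℝ → ℝ)
    (hf_cont : ContinuousOn (fun p : ℝ × ℝ => f p.1 p.2) (Ioo 0 1 ×ˢ Icc (-1) 1))
    (hg_cont : ContinuousOn (fun p : ℝ × ℝ => g p.1 p.2) (Ioo 0 1 ×ˢ Icc (-1) 1))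
    (hfx_cont : ContinuousOn (fun p : ℝ × ℝ => fx p.1 p.2) (Ioo 0 1 ×ˢ Icc (-1) 1))
    (hgx_cont : ContinuousOn (fun p : ℝ × ℝ => gx p.1 p.2) (Ioo 0 1 ×ˢ Icc (-1) 1))
    (hf_deriv : ∀ x ∈ Ioo (0 : ℝ) 1, ∀ v ∈ Icc (-1 : ℝ) 1,
      HasDerivAt (fun y => f y v) (fx x v) x)
    (hg_deriv : ∀ x ∈ Ioo (0 : ℝ) 1, ∀ v ∈ Icc (-1 : ℝ) 1,
      HasDerivAt (fun y => g y v) (gx x v) x)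
    (hfeq : ∀ x ∈ Ioo (0 : ℝ) 1, ∀ v ∈ Icc (-1 : ℝ) 1,
      v * fx x v = (σs x / Kn) * (vavg f x - f x v) - Kn * σa x * f x v)
    (hgeq : ∀ x ∈ Ioo (0 : ℝ) 1, ∀ v ∈ Icc (-1 : ℝ) 1,
      -(v * gx x v) = (σs x / Kn) * (vavg g x - g x v) - Kn * σa x * g x v) :
    ∀ x ∈ Ioo (0 : ℝ) 1, ∃ D : ℝ,
      HasDerivAt (fun y => vavg f y * vavg g y) D x ∧
      HasDerivAt (fun y => vavg (fun y v => f y v * g y v) y)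
        (((σs x / σa x) / (Kn ^ 2 + σs x / σa x)) * D) x ∧
      HasDerivAt
        (fun y => (1 / Kn) * (vavg f y * vavg g y - vavg (fun y v => f y v * g y v) y))
        ((Kn / (Kn ^ 2 + σs x / σa x)) * D) x := by
  intro x hx
  have hσsx := hσs x hx
  have hσax := hσa x hx
  have hsum := hasDerivAt_vavg isOpen_Ioo hf_cont hfx_cont hf_deriv hx |>.mul <|
    hasDerivAt_vavg isOpen_Ioo hg_cont hgx_cont hg_deriv hx
  have hprod := hasDerivAt_vavg (h := fun y v => f y v * g y v)
    (h' := fun y v => fx y v * g y v + f y v * gx y v) isOpen_Ioo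
    (hf_cont.mul hg_cont) ((hfx_cont.mul hg_cont).add (hf_cont.mul hgx_cont))
    (fun y hy v hv => (hf_deriv y hy v hv).mul (hg_deriv y hy v hv)) hx
  rw [vavg_deriv_mul_add_mul_deriv_eq (by positivity)
    ((hfx_cont.uncurry_left x hx).intervalIntegrable_of_Icc (by norm_num))
    ((hgx_cont.uncurry_left x hx).intervalIntegrable_of_Icc (by norm_num))
    (hfeq x hx) (hgeq x hx), div_div_add_mul_eq_div_div_sq_add hKn.ne' hσax.ne'] at hprod
  refine ⟨_, hsum, hprod, ((hsum.sub hprod).const_mul (1 / Kn)).congr_deriv ?_⟩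
  field_simp
  ring
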